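/- arXiv:2301.03218 — 2 statements merged into one kernel-verified Lean document; each statement's English description precedes it below -/
import Mathlib

section
/- Every nonempty convex bounded closed subset M of a Hilbert space H has a unique Chebyshev center, and this Chebyshev center lies in M. -/
/-!
The function `t²` is uniformly convex along midpoints: Apollonius' identity in `H` gives
`t (midpoint x y)² + (‖x - y‖ / 2)² ≤ (t x² + t y²) / 2`.
Hence every minimizing sequence of `t` is Cauchy, its limit is a minimizer, and two minimizers
coincide. Projecting a point onto the closed convex set `M` moves it closer to every point of `M`,
so the projection of the minimizer is again a minimizer, hence the minimizer itself lies in `M`.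
-/

open Filter Topology Set

section MidpointUniformlyConvex

variable {E : Type*} [NormedAddCommGroup E] [NormedSpace ℝ E] {g : E → ℝ}

theorem eq_of_forall_le_of_midpoint_add_sq_le
    (hg : ∀ x y, g (midpoint ℝ x y) + (dist x y / 2) ^ 2 ≤ (g x + g y) / 2)
    {x y : E} (hx : ∀ z, g x ≤ g z) (hy : ∀ z, g y ≤ g z) : x = y := by
  have hdist : (dist x y / 2) ^ 2 ≤ 0 := by
    linarith [hg x y, hx (midpoint ℝ x y), hx y, hy x]
  exact dist_eq_zero.mp (by nlinarith [dist_nonneg (x := x) (y := y)])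

theorem exists_forall_le_of_midpoint_add_sq_le [CompleteSpace E]
    (hg : ∀ x y, g (midpoint ℝ x y) + (dist x y / 2) ^ 2 ≤ (g x + g y) / 2)
    (hcont : Continuous g) (hbdd : BddBelow (range g)) : ∃ x, ∀ z, g x ≤ g z := by
  obtain ⟨v, -, hv, hv_mem⟩ := exists_seq_tendsto_sInf (range_nonempty g) hbdd
  choose u hu using hv_mem
  obtain rfl : v = g ∘ u := funext fun n => (hu n).symm
  set r := sInf (range g)
  have hr : ∀ z, r ≤ g z := fun z => csInf_le hbdd (mem_range_self z)
  have hcauchy : CauchySeq u := by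
    rw [cauchySeq_iff_tendsto_dist_atTop_0, ← prod_atTop_atTop_eq]
    have hbound : Tendsto (fun n : ℕ × ℕ => 2 * √((g (u n.1) + g (u n.2)) / 2 - r))
        (atTop ×ˢ atTop) (𝓝 0) := by
      have := (((hv.comp tendsto_fst).add (hv.comp tendsto_snd)).div_const 2).sub_const r
      simpa using (this.sqrt.const_mul 2)
    refine squeeze_zero (fun _ => dist_nonneg) (fun n => ?_) hbound
    have hdist : (dist (u n.1) (u n.2) / 2) ^ 2 ≤ (g (u n.1) + g (u n.2)) / 2 - r := by
      linarith [hg (u n.1) (u n.2), hr (midpoint ℝ (u n.1) (u n.2))]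
    have := Real.abs_le_sqrt hdist
    rw [abs_of_nonneg (by positivity)] at this
    linarith
  obtain ⟨x, hx⟩ := cauchySeq_tendsto_of_complete hcauchy
  have hgx : g x = r := tendsto_nhds_unique ((hcont.tendsto x).comp hx) hv
  exact ⟨x, fun z => hgx ▸ hr z⟩

end MidpointUniformlyConvex

section FarthestDist

variable {α : Type*} [PseudoMetricSpace α] {M : Set α}

/-- The function `t` of the Chebyshev-center problem (junk value `0` if `M` is unbounded). -/
noncomputable def farthestDist (M : Set α) (x : α) : ℝ :=
  ⨆ z : M, dist x z

theorem farthestDist_nonneg (x : α) : 0 ≤ farthestDist M x :=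
  Real.iSup_nonneg fun _ => dist_nonneg

theorem dist_le_farthestDist (hMb : Bornology.IsBounded M) (x : α) {z : α} (hz : z ∈ M) :
    dist x z ≤ farthestDist M x := by
  obtain ⟨C, hC⟩ := hMb.subset_closedBall x
  refine le_ciSup (f := fun w : M => dist x w) ⟨C, ?_⟩ ⟨z, hz⟩
  rintro _ ⟨w, rfl⟩
  simpa [dist_comm] using hC w.2

theorem farthestDist_le (hM : M.Nonempty) {x : α} {c : ℝ} (h : ∀ z ∈ M, dist x z ≤ c) :
    farthestDist M x ≤ c :=
  have : Nonempty M := hM.to_subtype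
  ciSup_le fun z => h z z.2

theorem farthestDist_sq_le (hM : M.Nonempty) {x : α} {c : ℝ}
    (h : ∀ z ∈ M, dist x z ^ 2 ≤ c) : farthestDist M x ^ 2 ≤ c := by
  obtain ⟨z₀, hz₀⟩ := hM
  have hc : 0 ≤ c := (sq_nonneg _).trans (h z₀ hz₀)
  have hle : farthestDist M x ≤ √c := farthestDist_le ⟨z₀, hz₀⟩ fun z hz =>
    Real.le_sqrt_of_sq_le (h z hz)
  calc farthestDist M x ^ 2 ≤ √c ^ 2 := by gcongr; exact farthestDist_nonneg x
    _ = c := Real.sq_sqrt hc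

theorem lipschitzWith_farthestDist (hM : M.Nonempty) (hMb : Bornology.IsBounded M) :
    LipschitzWith 1 (farthestDist M) :=
  LipschitzWith.of_le_add fun x y => farthestDist_le hM fun z hz =>
    calc dist x z ≤ dist x y + dist y z := dist_triangle x y z
      _ ≤ dist x y + farthestDist M y := by gcongr; exact dist_le_farthestDist hMb y hz
      _ = farthestDist M y + dist x y := add_comm _ _

end FarthestDist

section InnerProductSpace

variable {H : Type*} [NormedAddCommGroup H] [InnerProductSpace ℝ H] {M : Set H}

theorem farthestDist_midpoint_sq_add_sq_le (hM : M.Nonempty) (hMb : Bornology.IsBounded M)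
    (x y : H) :
    farthestDist M (midpoint ℝ x y) ^ 2 + (dist x y / 2) ^ 2 ≤
      (farthestDist M x ^ 2 + farthestDist M y ^ 2) / 2 := by
  suffices ∀ z ∈ M, dist (midpoint ℝ x y) z ^ 2 ≤
      (farthestDist M x ^ 2 + farthestDist M y ^ 2) / 2 - (dist x y / 2) ^ 2 by
    linarith [farthestDist_sq_le hM this]
  intro z hz
  have hapollonius :=
    EuclideanGeometry.dist_sq_add_dist_sq_eq_two_mul_dist_midpoint_sq_add_half_dist_sq z x y
  have hx : dist z x ^ 2 ≤ farthestDist M x ^ 2 := by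
    gcongr; rw [dist_comm]; exact dist_le_farthestDist hMb x hz
  have hy : dist z y ^ 2 ≤ farthestDist M y ^ 2 := by
    gcongr; rw [dist_comm]; exact dist_le_farthestDist hMb y hz
  rw [dist_comm]
  linarith

/-- `p` is the metric projection of `x`: the angle at `p` between `x` and any point of `M` is
obtuse. -/
theorem exists_mem_forall_dist_le_of_convex (hM : M.Nonempty) (hMc : IsComplete M)
    (hMconv : Convex ℝ M) (x : H) : ∃ p ∈ M, ∀ z ∈ M, dist p z ≤ dist x z := by
  obtain ⟨p, hpM, hp⟩ := exists_norm_eq_iInf_of_complete_convex hM hMc hMconv x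
  have hobtuse := (norm_eq_iInf_iff_real_inner_le_zero hMconv hpM).mp hp
  refine ⟨p, hpM, fun z hz => ?_⟩
  have hexpand : ‖x - z‖ ^ 2 = ‖x - p‖ ^ 2 - 2 * inner ℝ (x - p) (z - p) + ‖z - p‖ ^ 2 := by
    rw [← norm_sub_sq_real, sub_sub_sub_cancel_right]
  have hsq : dist p z ^ 2 ≤ dist x z ^ 2 := by
    rw [dist_eq_norm, dist_eq_norm, norm_sub_rev p z, hexpand]
    nlinarith [hobtuse z hz, sq_nonneg ‖x - p‖]
  exact (pow_le_pow_iff_left₀ dist_nonneg dist_nonneg two_ne_zero).mp hsq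

end InnerProductSpace

theorem chebyshev_center_exists_unique_in_set
    {H : Type*} [NormedAddCommGroup H] [InnerProductSpace ℝ H] [CompleteSpace H]
    (M : Set H) (hM : M.Nonempty) (hMconv : Convex ℝ M)
    (hMb : Bornology.IsBounded M) (hMcl : IsClosed M)
    (t : H → ℝ) (ht : ∀ x, t x = ⨆ z : M, ‖x - (z : H)‖) :
    ∃ x₀ : H, x₀ ∈ M ∧ (∀ x, t x₀ ≤ t x) ∧
      ∀ y : H, (∀ x, t y ≤ t x) → y = x₀ := by
  obtain rfl : t = farthestDist M := funext fun x => by simp only [ht, farthestDist, dist_eq_norm]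
  have hsq : ∀ x y, farthestDist M x ≤ farthestDist M y ↔
      farthestDist M x ^ 2 ≤ farthestDist M y ^ 2 := fun x y =>
    (pow_le_pow_iff_left₀ (farthestDist_nonneg x) (farthestDist_nonneg y) two_ne_zero).symm
  simp only [hsq]
  have hmid := farthestDist_midpoint_sq_add_sq_le hM hMb
  obtain ⟨x₀, hx₀⟩ := exists_forall_le_of_midpoint_add_sq_le hmid
    ((lipschitzWith_farthestDist hM hMb).continuous.pow 2)
    ⟨0, forall_mem_range.2 fun x => sq_nonneg _⟩
  have hunique : ∀ y, (∀ x, farthestDist M y ^ 2 ≤ farthestDist M x ^ 2) → y = x₀ :=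
    fun y hy => eq_of_forall_le_of_midpoint_add_sq_le hmid hy hx₀
  obtain ⟨p, hpM, hp⟩ := exists_mem_forall_dist_le_of_convex hM hMcl.isComplete hMconv x₀
  have hpx₀ : farthestDist M p ≤ farthestDist M x₀ :=
    farthestDist_le hM fun z hz => (hp z hz).trans (dist_le_farthestDist hMb x₀ hz)
  obtain rfl : p = x₀ := hunique p fun x => ((hsq p x₀).mp hpx₀).trans (hx₀ x)
  exact ⟨p, hpM, hx₀, hunique⟩
end

section
/- For any convex quadrilateral ABCD in ℝ² whose diagonals both have length 1 and meet at angle θ, the perimeter satisfies L(∂(ABCD)) ≥ 2√2 · sin(θ/2 + π/4). -/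
/-!
With `u = C - A` and `v = D - B`, the triangle inequality gives
`‖u - v‖ ≤ AB + CD` and `‖u + v‖ ≤ BC + DA`. For unit vectors at angle `θ` these two norms are
`2 sin (θ / 2)` and `2 cos (θ / 2)`, whose sum is `2 √2 sin (θ / 2 + π / 4)`.
-/

open Real InnerProductGeometry

section UnitVectors

variable {V : Type*} [NormedAddCommGroup V] [InnerProductSpace ℝ V]

theorem norm_sub_eq_two_mul_sin_half_angle {u v : V} (hu : ‖u‖ = 1) (hv : ‖v‖ = 1) :
    ‖u - v‖ = 2 * sin (angle u v / 2) := by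
  have hsin : 0 ≤ sin (angle u v / 2) :=
    sin_nonneg_of_nonneg_of_le_pi (by linarith [angle_nonneg u v])
      (by linarith [angle_le_pi u v, pi_pos])
  have hcos : cos (angle u v) = cos (angle u v / 2) ^ 2 - sin (angle u v / 2) ^ 2 := by
    rw [← cos_two_mul', mul_div_cancel₀ _ two_ne_zero]
  refine (sq_eq_sq₀ (norm_nonneg _) (by positivity)).mp ?_
  rw [sq, norm_sub_sq_eq_norm_sq_add_norm_sq_sub_two_mul_norm_mul_norm_mul_cos_angle, hu, hv, hcos]
  linear_combination -2 * sin_sq_add_cos_sq (angle u v / 2)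

theorem norm_add_eq_two_mul_cos_half_angle {u v : V} (hu : ‖u‖ = 1) (hv : ‖v‖ = 1) :
    ‖u + v‖ = 2 * cos (angle u v / 2) := by
  rw [← sub_neg_eq_add, norm_sub_eq_two_mul_sin_half_angle hu (by rwa [norm_neg]),
    angle_neg_right, sub_div, sin_pi_div_two_sub]

end UnitVectors

theorem sqrt_two_mul_sin_add_pi_div_four (x : ℝ) : √2 * sin (x + π / 4) = sin x + cos x := by
  rw [sin_add, sin_pi_div_four, cos_pi_div_four]
  ring_nf
  rw [sq_sqrt zero_le_two]
  ring

section Quadrilateral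

variable {E : Type*} [SeminormedAddCommGroup E] (A B C D : E)

theorem norm_diagonal_sub_le : ‖(C - A) - (D - B)‖ ≤ dist A B + dist C D := by
  rw [dist_comm A B, dist_eq_norm, dist_eq_norm, show C - A - (D - B) = B - A + (C - D) by abel]
  exact norm_add_le _ _

theorem norm_diagonal_add_le : ‖(C - A) + (D - B)‖ ≤ dist B C + dist D A := by
  rw [dist_comm B C, dist_eq_norm, dist_eq_norm, show C - A + (D - B) = C - B + (D - A) by abel]
  exact norm_add_le _ _

end Quadrilateral

theorem perimeter_bound_unit_diagonals_general
    (A B C D : EuclideanSpace ℝ (Fin 2)) (θ : ℝ)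
    (hAC : dist A C = 1) (hBD : dist B D = 1)
    (hθ : InnerProductGeometry.angle (C - A) (D - B) = θ) :
    2 * Real.sqrt 2 * Real.sin (θ / 2 + π / 4)
      ≤ dist A B + dist B C + dist C D + dist D A := by
  have hu : ‖C - A‖ = 1 := by rwa [← dist_eq_norm, dist_comm]
  have hv : ‖D - B‖ = 1 := by rwa [← dist_eq_norm, dist_comm]
  calc 2 * √2 * sin (θ / 2 + π / 4)
      = 2 * sin (θ / 2) + 2 * cos (θ / 2) := by
        rw [mul_assoc, sqrt_two_mul_sin_add_pi_div_four]; ring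
    _ = ‖(C - A) - (D - B)‖ + ‖(C - A) + (D - B)‖ := by
        rw [norm_sub_eq_two_mul_sin_half_angle hu hv, norm_add_eq_two_mul_cos_half_angle hu hv, hθ]
    _ ≤ dist A B + dist B C + dist C D + dist D A := by
        linarith [norm_diagonal_sub_le A B C D, norm_diagonal_add_le A B C D]

theorem perimeter_bound_unit_diagonals
    (A B C D : EuclideanSpace ℝ (Fin 2)) (θ : ℝ)
    (hconv : (segment ℝ A C ∩ segment ℝ B D).Nonempty)
    (hAC : dist A C = 1) (hBD : dist B D = 1)
    (hθ : InnerProductGeometry.angle (C - A) (D - B) = θ)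
    (hθ0 : 0 ≤ θ) (hθ2 : θ ≤ π / 2) :
    2 * Real.sqrt 2 * Real.sin (θ / 2 + π / 4)
      ≤ dist A B + dist B C + dist C D + dist D A :=
  perimeter_bound_unit_diagonals_general A B C D θ hAC hBD hθ
end
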